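/- arXiv:0704.3383 — 5 statements merged into one kernel-verified Lean document; each statement's English description precedes it below -/
import Mathlib

section
/- In a finite-dimensional real vector space V with a symmetric bilinear form ḡ of signature making W ⊂ V a degenerate hyperplane with one-dimensional radical Rad = W ∩ W^⊥, given a complement S of Rad in W (a screen subspace) on which ḡ is nondegenerate, and a nonzero ξ ∈ Rad, there exists a unique vector N ∈ V with ḡ(N,ξ) = 1, ḡ(N,N) = 0, and ḡ(N,w) = 0 for all w ∈ S. -/
/-! Since `ḡ` is nondegenerate on `S`, `V = S ⊕ S^⊥`, so some `F ⊥ S` has `ḡ(F, ξ) = 1`;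
as `ξ` is null and orthogonal to `S`, `N = F - ḡ(F, F)/2 • ξ` is a null transversal.
Two solutions differ by a vector orthogonal to `W = S ⊕ ℝξ`, i.e. by some `t • ξ`
(`W^⊥` is a line), and `ḡ(N + t • ξ, N + t • ξ) = ḡ(N, N) + 2t` forces `t = 0`. -/

open Module

namespace LinearMap.BilinForm

variable {K V : Type*} [Field K] [AddCommGroup V] [Module K V] {B : LinearMap.BilinForm K V}

lemma IsSymm.apply_add_smul_self_of_isotropic (hB : B.IsSymm) {x ξ : V} (hξξ : B ξ ξ = 0)
    (hxξ : B x ξ = 1) (t : K) : B (x + t • ξ) (x + t • ξ) = B x x + 2 * t := by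
  simp only [map_add, map_smul, LinearMap.add_apply, LinearMap.smul_apply, smul_eq_mul, hξξ, hxξ,
    hB.eq ξ x]
  ring

lemma exists_mem_orthogonal_apply_eq_one [FiniteDimensional K V] (hB : B.IsSymm)
    (hnd : B.Nondegenerate) {S : Submodule K V} (hS : (B.restrict S).Nondegenerate) {ξ : V}
    (hξ0 : ξ ≠ 0) (hξS : ∀ w ∈ S, B w ξ = 0) : ∃ F ∈ B.orthogonal S, B F ξ = 1 := by
  obtain ⟨v, hv⟩ : ∃ v, B v ξ ≠ 0 := by
    by_contra! h
    exact hξ0 (hnd.2 ξ h)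
  obtain ⟨s, F, hs, hF, hsF⟩ := Submodule.codisjoint_iff_exists_add_eq.mp
    (isCompl_orthogonal_of_restrict_nondegenerate hB.isRefl hS).codisjoint ((B v ξ)⁻¹ • v)
  refine ⟨F, hF, ?_⟩
  have hvξ : B (s + F) ξ = 1 := by
    rw [hsF, map_smul, LinearMap.smul_apply, smul_eq_mul, inv_mul_cancel₀ hv]
  rwa [map_add, LinearMap.add_apply, hξS s hs, zero_add] at hvξ

variable [NeZero (2 : K)]

lemma eq_of_isotropic_apply_eq_one (hB : B.IsSymm) {S : Submodule K V} {ξ : V}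
    (hperp : B.orthogonal (S ⊔ K ∙ ξ) ≤ K ∙ ξ) (hξξ : B ξ ξ = 0) {M N : V}
    (hMξ : B M ξ = 1) (hMM : B M M = 0) (hMS : ∀ w ∈ S, B M w = 0)
    (hNξ : B N ξ = 1) (hNN : B N N = 0) (hNS : ∀ w ∈ S, B N w = 0) :
    N = M := by
  have hker : S ⊔ K ∙ ξ ≤ LinearMap.ker (B (N - M)) :=
    sup_le (fun w hw => by simp [hNS w hw, hMS w hw])
      (Submodule.span_singleton_le_iff_mem _ _ |>.mpr (by simp [hNξ, hMξ]))
  obtain ⟨t, ht⟩ := Submodule.mem_span_singleton.mp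
    (hperp fun w hw => (hB.eq w (N - M)).trans (hker hw))
  rw [eq_sub_iff_add_eq'] at ht
  subst ht
  have ht : 2 * t = 0 := by
    rwa [hB.apply_add_smul_self_of_isotropic hξξ hMξ, hMM, zero_add] at hNN
  simp [(mul_eq_zero.mp ht).resolve_left two_ne_zero]

theorem existsUnique_isotropic_apply_eq_one [FiniteDimensional K V] (hB : B.IsSymm)
    (hnd : B.Nondegenerate) {S : Submodule K V} (hS : (B.restrict S).Nondegenerate) {ξ : V}
    (hξ0 : ξ ≠ 0) (hperp : B.orthogonal (S ⊔ K ∙ ξ) = K ∙ ξ) :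
    ∃! N : V, B N ξ = 1 ∧ B N N = 0 ∧ ∀ w ∈ S, B N w = 0 := by
  have hξ : ξ ∈ B.orthogonal (S ⊔ K ∙ ξ) := by
    rw [hperp]; exact Submodule.mem_span_singleton_self ξ
  have hξξ : B ξ ξ = 0 :=
    hξ ξ (Submodule.mem_sup_right (Submodule.mem_span_singleton_self ξ))
  have hSξ : ∀ w ∈ S, B w ξ = 0 := fun w hw => hξ w (Submodule.mem_sup_left hw)
  obtain ⟨F, hFS, hFξ⟩ := exists_mem_orthogonal_apply_eq_one hB hnd hS hξ0 hSξ
  set M := F + (-(B F F / 2)) • ξ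
  have hMξ : B M ξ = 1 := by simp [M, hFξ, hξξ]
  have hMM : B M M = 0 := by
    rw [hB.apply_add_smul_self_of_isotropic hξξ hFξ]
    field_simp
    ring
  have hMS : ∀ w ∈ S, B M w = 0 := fun w hw => by
    simp [M, hB.eq F w, hFS w hw, hB.eq ξ w, hSξ w hw]
  exact ⟨M, ⟨hMξ, hMM, hMS⟩, fun N ⟨hNξ, hNN, hNS⟩ =>
    eq_of_isotropic_apply_eq_one hB hperp.le hξξ hMξ hMM hMS hNξ hNN hNS⟩

end LinearMap.BilinForm

theorem stmt_1_general (n : ℕ) {V : Type*} [AddCommGroup V] [Module ℝ V]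
    [FiniteDimensional ℝ V]
    (hV : finrank ℝ V = n + 2)
    (gbar : LinearMap.BilinForm ℝ V) (hsym : gbar.IsSymm)
    (hnd : gbar.Nondegenerate)
    (W : Submodule ℝ V) (hW : finrank ℝ W = n + 1)
    (hRad : finrank ℝ ((W ⊓ gbar.orthogonal W : Submodule ℝ V)) = 1)
    (S : Submodule ℝ V)
    (hsup : S ⊔ (W ⊓ gbar.orthogonal W) = W)
    (hSnd : (gbar.restrict S).Nondegenerate)
    (ξ : V) (hξ : ξ ∈ W ⊓ gbar.orthogonal W) (hξ0 : ξ ≠ 0) :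
    ∃! N : V, gbar N ξ = 1 ∧ gbar N N = 0 ∧ ∀ w ∈ S, gbar N w = 0 := by
  have hRadξ : W ⊓ gbar.orthogonal W = ℝ ∙ ξ :=
    eq_span_singleton_of_mem_of_finrank_eq_one hRad hξ hξ0
  have hWξ : gbar.orthogonal W = ℝ ∙ ξ := by
    refine eq_span_singleton_of_mem_of_finrank_eq_one ?_ hξ.2 hξ0
    rw [LinearMap.BilinForm.finrank_orthogonal hnd, hV, hW]
    omega
  rw [hRadξ] at hsup
  exact LinearMap.BilinForm.existsUnique_isotropic_apply_eq_one hsym hnd hSnd hξ0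
    (by rw [hsup, hWξ])

/-- Existence and uniqueness of the null transversal vector `N` (Prop. 2, pointwise):
given a degenerate hyperplane `W` with one-dimensional radical `Rad = W ⊓ W^⊥`,
a screen complement `S` of `Rad` in `W` on which `ḡ` is nondegenerate, and a
nonzero `ξ ∈ Rad`, there is a unique `N` with `ḡ(N,ξ) = 1`, `ḡ(N,N) = 0` and
`ḡ(N,w) = 0` for all `w ∈ S`. -/
theorem stmt_1 (n : ℕ) {V : Type*} [AddCommGroup V] [Module ℝ V]
    [FiniteDimensional ℝ V]
    (hV : finrank ℝ V = n + 2)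
    (gbar : LinearMap.BilinForm ℝ V) (hsym : gbar.IsSymm)
    (hnd : gbar.Nondegenerate)
    (W : Submodule ℝ V) (hW : finrank ℝ W = n + 1)
    (hRad : finrank ℝ ((W ⊓ gbar.orthogonal W : Submodule ℝ V)) = 1)
    (S : Submodule ℝ V) (hSW : S ≤ W)
    (hdisj : Disjoint S (W ⊓ gbar.orthogonal W))
    (hsup : S ⊔ (W ⊓ gbar.orthogonal W) = W)
    (hSnd : (gbar.restrict S).Nondegenerate)
    (ξ : V) (hξ : ξ ∈ W ⊓ gbar.orthogonal W) (hξ0 : ξ ≠ 0) :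
    ∃! N : V, gbar N ξ = 1 ∧ gbar N N = 0 ∧ ∀ w ∈ S, gbar N w = 0 :=
  stmt_1_general n hV gbar hsym hnd W hW hRad S hsup hSnd ξ hξ hξ0
end

section
/- Let (M,g,S(TM)) be a lightlike hypersurface of a pseudo-Riemannian manifold. Then M is totally geodesic (B ≡ 0) if and only if the induced connection ∇ is both torsion-free and metric (∇g = 0). -/
/-- Theorem 2 (iv): a lightlike hypersurface `(M, g, S(TM))` is totally geodesic
(`B ≡ 0`) iff the induced connection `∇` is torsion-free and metric (`∇g = 0`).
`br` is the Lie bracket of tangent vector fields, `∇̄` the ambient metric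
torsion-free connection, and `∇` the induced connection via the Gauss formula. -/
theorem stmt_6 {E A : Type*} [CommRing A] [Algebra ℝ A]
    [AddCommGroup E] [Module A E]
    (gbar : E →ₗ[A] E →ₗ[A] A) (hsym : ∀ u v, gbar u v = gbar v u)
    (tan : E → Prop)
    (ξ N : E) (hξtan : tan ξ)
    (hrad : ∀ u, tan u → gbar ξ u = 0)
    (hNξ : gbar N ξ = 1)
    (nablabar nabla : E → E → E) (br : E → E → E)
    (deriv : E → A →ₗ[ℝ] A)
    (hcompat : ∀ x u v, tan x →
      deriv x (gbar u v) = gbar (nablabar x u) v + gbar u (nablabar x v))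
    (hbar_tf : ∀ x y, tan x → tan y → nablabar x y - nablabar y x = br x y)
    (hbr_tan : ∀ x y, tan x → tan y → tan (br x y))
    (B : E → E → A) (hB : ∀ x y, B x y = gbar (nablabar x y) ξ)
    (hGauss : ∀ x y, tan x → tan y → nablabar x y = nabla x y + B x y • N)
    (hnabla_tan : ∀ x y, tan x → tan y → tan (nabla x y)) :
    (∀ x y, tan x → tan y → B x y = 0) ↔
      ((∀ x y, tan x → tan y → nabla x y - nabla y x = br x y) ∧
       (∀ x y z, tan x → tan y → tan z →
         deriv x (gbar y z) = gbar (nabla x y) z + gbar y (nabla x z))) := by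
  constructor
  · intro h0
    have heq : ∀ x y, tan x → tan y → nablabar x y = nabla x y := by
      intro x y hx hy
      rw [hGauss x y hx hy, h0 x y hx hy, zero_smul, add_zero]
    constructor
    · intro x y hx hy
      rw [← heq x y hx hy, ← heq y x hy hx, hbar_tf x y hx hy]
    · intro x y z hx hy hz
      rw [hcompat x y z hx, heq x y hx hy, heq x z hx hz]
  · rintro ⟨htf, hmet⟩ x y hx hy
    -- key identity: for all tangent y z, B x y * gbar N z + B x z * gbar N y = 0
    have key : ∀ y z, tan y → tan z →
        B x y * gbar N z + B x z * gbar N y = 0 := by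
      intro y z hy hz
      have h1 := hcompat x y z hx
      have h2 := hmet x y z hx hy hz
      rw [hGauss x y hx hy, hGauss x z hx hz] at h1
      simp only [map_add, map_smul, LinearMap.add_apply, LinearMap.smul_apply,
        smul_eq_mul] at h1
      rw [h2] at h1
      have h3 : gbar N y = gbar y N := hsym N y
      linear_combination -h1 + B x z * h3
    have hxξ : B x ξ = 0 := by
      have h := key ξ ξ hξtan hξtan
      rw [hNξ, mul_one] at h
      have h2 : (2 : A) * B x ξ = 0 := by linear_combination h
      have : ((algebraMap ℝ A) 2) * B x ξ = 0 := by
        rw [map_ofNat]; exact h2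
      calc B x ξ = (algebraMap ℝ A) (2⁻¹) * ((algebraMap ℝ A) 2 * B x ξ) := by
            rw [← mul_assoc, ← map_mul]; norm_num
        _ = 0 := by rw [this, mul_zero]
    have h := key y ξ hy hξtan
    rw [hNξ, mul_one, hxξ, zero_mul, add_zero] at h
    exact h
end

section
/- If (M,g₀) is a totally geodesic lightlike hypersurface and D is a Weyl structure on (M,c) with Dg₀ = −2θ₀ ⊗ g₀, then θ₀ is horizontal: θ₀(X) = 0 for every X ∈ Rad TM; moreover for g = e^{−2f}g₀ ∈ c with df vanishing on Rad TM, the associated 1-form θ_g = θ₀ + df is also horizontal. -/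
/-- Lemma 2 (i): if `(M, g₀)` is totally geodesic (`L_X g₀ = 0` for radical `X`)
and `D` is a Weyl structure with `Dg₀ = -2θ₀ ⊗ θ₀`, then `θ₀` is horizontal:
`θ₀(X) = 0` for `X ∈ Rad TM`; moreover for `g = e^{-2f} g₀` with `df` vanishing
on the radical, `θ_g = θ₀ + df` is horizontal as well. -/
theorem stmt_11 {X A : Type*} [CommRing A] [Algebra ℝ A]
    [AddCommGroup X] [Module A X]
    (g0 : X →ₗ[A] X →ₗ[A] A) (hsym : ∀ u v, g0 u v = g0 v u)
    (Rad : X → Prop) (hRad : ∀ z, Rad z ↔ ∀ y, g0 z y = 0)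
    (D : X → X → X) (br : X → X → X) (θ0 : X → A)
    (deriv : X → A → A) (hderiv0 : ∀ x, deriv x 0 = 0)
    (htf : ∀ x y, D x y - D y x = br x y)
    (hWeyl : ∀ x y z,
      deriv x (g0 y z) - g0 (D x y) z - g0 y (D x z) = -(2 : A) * θ0 x * g0 y z)
    (hTG : ∀ x y z, Rad x →
      deriv x (g0 y z) = g0 (br x y) z + g0 y (br x z))
    (hunit : ∃ y z, IsUnit (g0 y z)) :
    (∀ x, Rad x → θ0 x = 0) ∧
    (∀ df : X → A, (∀ x, Rad x → df x = 0) →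
      ∀ x, Rad x → θ0 x + df x = 0) := by
  have main : ∀ x, Rad x → θ0 x = 0 := by
    intro x hx
    have hx0 : ∀ y, g0 x y = 0 := (hRad x).mp hx
    -- for any w, g0 (D w x) u = 0
    have hDx : ∀ w u, g0 (D w x) u = 0 := by
      intro w u
      have h := hWeyl w x u
      have h1 : g0 x u = 0 := hx0 u
      have h2 : g0 x (D w u) = 0 := hx0 _
      rw [h1, h2] at h
      rw [hderiv0] at h
      have := h
      linear_combination -this
    obtain ⟨y, z, hu⟩ := hunit
    have hW := hWeyl x y z
    have hT := hTG x y z hx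
    have hbr1 : g0 (br x y) z = g0 (D x y) z - g0 (D y x) z := by
      rw [← htf]
      simp [map_sub]
    have hbr2 : g0 y (br x z) = g0 y (D x z) - g0 y (D z x) := by
      rw [← htf]
      simp
    have hDyx : g0 (D y x) z = 0 := hDx y z
    have hDzx : g0 y (D z x) = 0 := by rw [hsym]; exact hDx z y
    have key : -(2 : A) * θ0 x * g0 y z = 0 := by
      rw [← hW, hT, hbr1, hbr2, hDyx, hDzx]
      ring
    obtain ⟨v, hv⟩ := hu
    have h2 : (2 : A) * θ0 x = 0 := by
      have h3 : -(2:A) * θ0 x * ↑v * ↑v⁻¹ = 0 := by rw [hv, key, zero_mul]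
      rw [mul_assoc, v.mul_inv, mul_one] at h3
      linear_combination -h3
    have hinv : IsUnit (2 : A) := by
      have : (2 : A) = algebraMap ℝ A 2 := by
        simp [map_ofNat]
      rw [this]
      exact (isUnit_iff_ne_zero.mpr two_ne_zero).map (algebraMap ℝ A)
    obtain ⟨u, hu2⟩ := hinv
    have hcalc : (↑u⁻¹ : A) * ((2:A) * θ0 x) = θ0 x := by
      rw [← hu2, ← mul_assoc, u.inv_mul, one_mul]
    rw [← hcalc, h2, mul_zero]
  refine ⟨main, fun df hdf x hx => by rw [main x hx, hdf x hx, add_zero]⟩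
end

section
/- Let (M,g) be a totally geodesic lightlike hypersurface of a flat pseudo-Riemannian manifold, with integrable screen distribution. Then for all horizontal vector fields X, Y, the Ricci tensor of the induced connection restricted to the horizontal equals the Ricci tensor of the induced Riemannian metric g' on the leaves: Ric^g(X,Y) = Ric^{g'}(X,Y). Consequently, along any leaf M', scal^g|_{M'} = scal^{g'}. -/
/-- Lemma (ric=ric') and Remark (scal=scal'): for a totally geodesic lightlike
hypersurface of a flat ambient manifold (so `R^g(·,ξ)· = 0`), with integrable
screen and screen Gauss equation
`R^g(X,Y)Z = R*(X,Y)Z + c(X,Y,Z) ξ` for horizontal `X,Y,Z`, the Ricci tensor of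
the induced connection (computed in an adapted quasiorthonormal frame
`{ξ, e₁, …, e_n}` with the pseudo-inverse, i.e. using `g̃ = g + η ⊗ η` on the
`ξ`-direction) agrees on horizontal fields with the Ricci tensor of the induced
metric on the leaves; consequently the scalar curvatures agree along leaves. -/
theorem stmt_14 {X A : Type*} [CommRing A] [Algebra ℝ A]
    [AddCommGroup X] [Module A X]
    (n : ℕ)
    (g : X →ₗ[A] X →ₗ[A] A) (hsym : ∀ u v, g u v = g v u)
    (hor : X → Prop) (ξ : X)
    (η : X →ₗ[A] A) (hηξ : η ξ = 1) (hηhor : ∀ u, hor u → η u = 0)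
    (hgξ : ∀ u, g ξ u = 0)
    (e : Fin n → X) (he : ∀ i, hor (e i))
    (horth : ∀ i j, g (e i) (e j) = if i = j then 1 else 0)
    (Rg Rstar : X → X → X → X)
    (hanti : ∀ x y z, Rg x y z = - Rg y x z)
    (hflat : ∀ x y, Rg x ξ y = 0)
    (c : X → X → X → A)
    (hGaussScr : ∀ x y z, hor x → hor y → hor z →
      Rg x y z = Rstar x y z + c x y z • ξ)
    (hRstarhor : ∀ x y z, hor x → hor y → hor z → hor (Rstar x y z))
    (Ricg Ricg' : X → X → A)
    (hRicg : ∀ x y, Ricg x y =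
      (∑ i, g (Rg x (e i) y) (e i))
        + (g (Rg x ξ y) ξ + η (Rg x ξ y) * η ξ))
    (hRicg' : ∀ x y, Ricg' x y = ∑ i, g (Rstar x (e i) y) (e i)) :
    (∀ x y, hor x → hor y → Ricg x y = Ricg' x y) ∧
    (∑ i, Ricg (e i) (e i)) + Ricg ξ ξ = ∑ i, Ricg' (e i) (e i) := by
  have key : ∀ x y, hor x → hor y → Ricg x y = Ricg' x y := by
    intro x y hx hy
    rw [hRicg, hRicg', hflat]
    simp only [map_zero, LinearMap.zero_apply, zero_mul, add_zero]
    refine Finset.sum_congr rfl fun i _ => ?_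
    rw [hGaussScr x (e i) y hx (he i) hy]
    rw [map_add, LinearMap.add_apply, map_smul, LinearMap.smul_apply,
      hgξ]
    simp
  refine ⟨key, ?_⟩
  have hξ : Ricg ξ ξ = 0 := by
    rw [hRicg]
    have h1 : ∀ i, Rg ξ (e i) ξ = 0 := fun i => by
      rw [hanti, hflat]; simp
    simp [h1, hflat]
  rw [hξ, add_zero]
  exact Finset.sum_congr rfl fun i _ => key _ _ (he i) (he i)
end

section
/- If (M,g₀) is a totally geodesic lightlike hypersurface of a Kaehler manifold, then (D^{g₀}_X θ₀)(Y) = θ₀(Y) φ_{g₀}(X) and D^{g₀}_X θ₀^{♯} = φ_{g₀}(X) θ₀^{♯} for all tangent X, Y; consequently 2 dθ₀(X,Y) = φ_{g₀}(X)θ₀(Y) − φ_{g₀}(Y)θ₀(X) = (φ_{g₀} ∧ θ₀)(X,Y), so θ₀ is closed if and only if θ₀ and φ_{g₀} are proportional. -/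
/-- Corollary and Theorem 4: if `(M, g₀)` is a totally geodesic lightlike
hypersurface of a Kaehler manifold, then
`(D^{g₀}_X θ₀)(Y) = θ₀(Y) φ_{g₀}(X)` and `D^{g₀}_X θ₀^♯ = φ_{g₀}(X) θ₀^♯`;
consequently `2 dθ₀(X,Y) = φ_{g₀}(X)θ₀(Y) - φ_{g₀}(Y)θ₀(X)`, so the 1-form
`θ₀` is closed iff `θ₀` and `φ_{g₀}` are proportional. -/
theorem stmt_18 {E A : Type*} [CommRing A] [Algebra ℝ A]
    [AddCommGroup E] [Module A E]
    (gbar : E →ₗ[A] E →ₗ[A] A) (hsym : ∀ u v, gbar u v = gbar v u)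
    (J : E →ₗ[A] E) (hJ2 : ∀ u, J (J u) = -u)
    (hherm : ∀ u v, gbar (J u) (J v) = gbar u v)
    (tan : E → Prop)
    (ξ N : E) (hξtan : tan ξ)
    (hNξ : gbar N ξ = 1) (hNnull : gbar N N = 0)
    (hrad : ∀ u, tan u → gbar u ξ = 0)
    (U V : E) (hU : U = -J N) (hV : V = -J ξ)
    (hUtan : tan U) (hVtan : tan V)
    (θ0 : E → A) (hθ0 : ∀ x, θ0 x = gbar x V)
    (F : E → E) (hF : ∀ x, F x = J x - θ0 x • N)
    (nablabar D : E → E → E) (deriv : E → A → A)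
    (hcompat : ∀ x u v, tan x →
      deriv x (gbar u v) = gbar (nablabar x u) v + gbar u (nablabar x v))
    (hJpar : ∀ x u, tan x → nablabar x (J u) = J (nablabar x u))
    (B : E → E → A) (hB : ∀ x y, B x y = gbar (nablabar x y) ξ)
    (hGauss : ∀ x y, tan x → tan y → nablabar x y = D x y + B x y • N)
    (hDtan : ∀ x y, tan x → tan y → tan (D x y))
    -- total geodesy: B ≡ 0, hence A*_ξ ≡ 0 and ∇_X ξ = φ_{g₀}(X) ξ
    (hTG : ∀ x y, tan x → tan y → B x y = 0)
    (φ : E → A)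
    (hDξ : ∀ x, tan x → D x ξ = φ x • ξ) :
    (∀ x y, tan x → tan y → deriv x (θ0 y) - θ0 (D x y) = θ0 y * φ x) ∧
    (∀ x, tan x → D x V = φ x • V) ∧
    (∀ x y, tan x → tan y →
      (deriv x (θ0 y) - θ0 (D x y)) - (deriv y (θ0 x) - θ0 (D y x))
        = φ x * θ0 y - φ y * θ0 x) ∧
    ((∀ x y, tan x → tan y →
        (deriv x (θ0 y) - θ0 (D x y)) - (deriv y (θ0 x) - θ0 (D y x)) = 0) ↔
      (∀ x y, tan x → tan y → φ x * θ0 y = φ y * θ0 x)) := by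

  have hJV : J V = ξ := by rw [hV, map_neg, hJ2, neg_neg]
  have hJξ : J ξ = -V := by rw [hV, neg_neg]
  have hnab : ∀ x, tan x → nablabar x V = φ x • V := by
    intro x hx
    have h1 : nablabar x ξ = φ x • ξ := by
      rw [hGauss x ξ hx hξtan, hTG x ξ hx hξtan, hDξ x hx, zero_smul, add_zero]
    have h2 : J (nablabar x V) = φ x • ξ := by
      rw [← hJpar x V hx, hJV, h1]
    have h3 := congrArg J h2
    rw [hJ2, map_smul, hJξ, smul_neg] at h3
    exact (neg_injective h3)
  have hDV : ∀ x, tan x → D x V = φ x • V := by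
    intro x hx
    have := hGauss x V hx hVtan
    rw [hTG x V hx hVtan, zero_smul, add_zero, hnab x hx] at this
    exact this.symm
  have hmain : ∀ x y, tan x → tan y → deriv x (θ0 y) - θ0 (D x y) = θ0 y * φ x := by
    intro x y hx hy
    have hnxy : nablabar x y = D x y := by
      rw [hGauss x y hx hy, hTG x y hx hy, zero_smul, add_zero]
    rw [hθ0 y, hcompat x y V hx, hnxy, hnab x hx, map_smul, smul_eq_mul,
      hθ0 (D x y)]
    ring
  refine ⟨hmain, hDV, ?_, ?_⟩
  · intro x y hx hy
    rw [hmain x y hx hy, hmain y x hy hx]; ring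
  · constructor
    · intro h x y hx hy
      have := h x y hx hy
      rw [hmain x y hx hy, hmain y x hy hx] at this
      linear_combination this
    · intro h x y hx hy
      rw [hmain x y hx hy, hmain y x hy hx]
      linear_combination h x y hx hy
end
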